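/- Let d ≥ 1, let x, y ∈ ℝ^d with x ≠ y, and let S, T ∈ ℝ^{d×d} with T invertible. Suppose ‖S − T‖ ≤ M and ‖T⁻¹‖ ≤ Λ for constants M ≥ 0 and Λ > 0. Set z = x − y, e = z/|z|, u = (T⁻¹z)/|T⁻¹z|, H = I − 2uuᵀ, and α = S − TH. Then |αᵀe| ≥ 2Λ⁻¹ − M. -/

import Mathlib

open scoped Matrix

/-- Action of a `d × d` real matrix on `EuclideanSpace ℝ (Fin d)`. -/
noncomputable def matVec {d : ℕ} (S : Matrix (Fin d) (Fin d) ℝ)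
    (x : EuclideanSpace ℝ (Fin d)) : EuclideanSpace ℝ (Fin d) :=
  Matrix.toEuclideanCLM (𝕜 := ℝ) S x

/-- The operator norm of a `d × d` real matrix induced by the Euclidean norm. -/
noncomputable def matNorm {d : ℕ} (S : Matrix (Fin d) (Fin d) ℝ) : ℝ :=
  ‖Matrix.toEuclideanCLM (𝕜 := ℝ) S‖

/-!
Since `(T uuᵀ)ᵀ e = ⟪u, Tᵀ e⟫ u = ⟪T u, e⟫ u`, the vector `αᵀ e` splits as
`(S - T)ᵀ e + 2 ⟪T u, e⟫ u`. Here `u` is a unit vector, `T u` is a positive multiple of `z`, and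
`⟪T u, e⟫ = |z| / |T⁻¹ z| ≥ ‖T⁻¹‖⁻¹ ≥ Λ⁻¹`, while `|(S - T)ᵀ e| ≤ ‖S - T‖ ≤ M`; the triangle
inequality finishes the proof.
-/

open scoped RealInnerProductSpace

noncomputable def householder {d : ℕ} (u : EuclideanSpace ℝ (Fin d)) :
    Matrix (Fin d) (Fin d) ℝ :=
  1 - (2 : ℝ) • Matrix.vecMulVec (fun i => u i) (fun i => u i)

section MatVec

variable {d : ℕ}

lemma toEuclideanCLM_transpose (A : Matrix (Fin d) (Fin d) ℝ) :
    Matrix.toEuclideanCLM (𝕜 := ℝ) Aᵀ =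
      ContinuousLinearMap.adjoint (Matrix.toEuclideanCLM (𝕜 := ℝ) A) := by
  rw [← Matrix.conjTranspose_eq_transpose_of_trivial, ← ContinuousLinearMap.star_eq_adjoint]
  exact map_star _ A

lemma matNorm_transpose (A : Matrix (Fin d) (Fin d) ℝ) : matNorm Aᵀ = matNorm A := by
  rw [matNorm, toEuclideanCLM_transpose]
  exact ContinuousLinearMap.adjoint.norm_map _

lemma inner_matVec_transpose (A : Matrix (Fin d) (Fin d) ℝ) (u v : EuclideanSpace ℝ (Fin d)) :
    ⟪u, matVec Aᵀ v⟫ = ⟪matVec A u, v⟫ := by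
  rw [matVec, toEuclideanCLM_transpose]
  exact ContinuousLinearMap.adjoint_inner_right _ _ _

lemma norm_matVec_le (A : Matrix (Fin d) (Fin d) ℝ) (v : EuclideanSpace ℝ (Fin d)) :
    ‖matVec A v‖ ≤ matNorm A * ‖v‖ :=
  (Matrix.toEuclideanCLM (𝕜 := ℝ) A).le_opNorm v

lemma matVec_mul (A B : Matrix (Fin d) (Fin d) ℝ) (v : EuclideanSpace ℝ (Fin d)) :
    matVec (A * B) v = matVec A (matVec B v) := by
  simp [matVec, map_mul]

lemma matVec_add (A B : Matrix (Fin d) (Fin d) ℝ) (v : EuclideanSpace ℝ (Fin d)) :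
    matVec (A + B) v = matVec A v + matVec B v := by
  simp [matVec]

lemma matVec_smul (c : ℝ) (A : Matrix (Fin d) (Fin d) ℝ) (v : EuclideanSpace ℝ (Fin d)) :
    matVec (c • A) v = c • matVec A v := by
  simp [matVec]

lemma matVec_vecMulVec_self (u w : EuclideanSpace ℝ (Fin d)) :
    matVec (Matrix.vecMulVec (fun i => u i) (fun i => u i)) w = ⟪u, w⟫ • u := by
  ext i
  simp only [matVec, Matrix.ofLp_toEuclideanCLM, Matrix.mulVec, dotProduct,
    Matrix.vecMulVec_apply, PiLp.smul_apply, smul_eq_mul, PiLp.inner_apply, RCLike.inner_apply,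
    conj_trivial, Finset.sum_mul]
  exact Finset.sum_congr rfl fun j _ => by ring

lemma matVec_mul_nonsing_inv {T : Matrix (Fin d) (Fin d) ℝ} (hT : IsUnit T)
    (z : EuclideanSpace ℝ (Fin d)) : matVec T (matVec T⁻¹ z) = z := by
  rw [← matVec_mul, Matrix.mul_nonsing_inv T ((Matrix.isUnit_iff_isUnit_det T).mp hT)]
  simp [matVec]

lemma matVec_transpose_sub_mul_householder (S T : Matrix (Fin d) (Fin d) ℝ)
    (u e : EuclideanSpace ℝ (Fin d)) :
    matVec (S - T * householder u)ᵀ e = matVec (S - T)ᵀ e + (2 * ⟪matVec T u, e⟫) • u := by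
  have hsplit : S - T * householder u
      = (S - T) + (2 : ℝ) • (T * Matrix.vecMulVec (fun i => u i) (fun i => u i)) := by
    rw [householder, Matrix.mul_sub, Matrix.mul_one, Matrix.mul_smul]
    abel
  rw [hsplit, Matrix.transpose_add, Matrix.transpose_smul, Matrix.transpose_mul,
    Matrix.transpose_vecMulVec, matVec_add, matVec_smul, matVec_mul, matVec_vecMulVec_self, inner_matVec_transpose,
    smul_smul]

lemma sub_matNorm_le_norm_matVec_transpose_sub_mul_householder
    (S T : Matrix (Fin d) (Fin d) ℝ) {u e : EuclideanSpace ℝ (Fin d)}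
    (hu : ‖u‖ = 1) (he : ‖e‖ = 1) :
    2 * ⟪matVec T u, e⟫ - matNorm (S - T) ≤ ‖matVec (S - T * householder u)ᵀ e‖ := by
  rw [matVec_transpose_sub_mul_householder]
  set v := matVec (S - T)ᵀ e
  set c := 2 * ⟪matVec T u, e⟫
  have hv : ‖v‖ ≤ matNorm (S - T) := by
    simpa only [matNorm_transpose, he, mul_one] using norm_matVec_le (S - T)ᵀ e
  have hc : c ≤ ‖c • u‖ := by
    rw [norm_smul, hu, mul_one]
    exact Real.le_norm_self c
  have htri : ‖c • u‖ ≤ ‖v + c • u‖ + ‖v‖ := by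
    simpa only [add_sub_cancel_left] using norm_sub_le (v + c • u) v
  linarith

lemma inner_matVec_normalize_inv_normalize {T : Matrix (Fin d) (Fin d) ℝ} (hT : IsUnit T)
    (z : EuclideanSpace ℝ (Fin d)) :
    ⟪matVec T (‖matVec T⁻¹ z‖⁻¹ • matVec T⁻¹ z), ‖z‖⁻¹ • z⟫ = ‖z‖ / ‖matVec T⁻¹ z‖ := by
  rw [matVec, map_smul, ← matVec, matVec_mul_nonsing_inv hT, real_inner_smul_left,
    real_inner_smul_right, real_inner_self_eq_norm_sq]
  rcases eq_or_ne ‖z‖ 0 with hz | hz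
  · simp [hz]
  · field_simp

lemma inv_le_norm_div_norm_matVec {A : Matrix (Fin d) (Fin d) ℝ} {Λ : ℝ} (hA : matNorm A ≤ Λ)
    {z : EuclideanSpace ℝ (Fin d)} (hAz : matVec A z ≠ 0) :
    Λ⁻¹ ≤ ‖z‖ / ‖matVec A z‖ := by
  have hpos : 0 < ‖matVec A z‖ := norm_pos_iff.mpr hAz
  have hle : ‖matVec A z‖ ≤ Λ * ‖z‖ :=
    (norm_matVec_le A z).trans (mul_le_mul_of_nonneg_right hA (norm_nonneg z))
  have hΛ : 0 < Λ := pos_of_mul_pos_left (hpos.trans_le hle) (norm_nonneg z)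
  rw [le_div_iff₀ hpos, inv_mul_le_iff₀ hΛ]
  exact hle

end MatVec

theorem reflection_coupling_nondegenerate
    {d : ℕ} (x y : EuclideanSpace ℝ (Fin d)) (hxy : x ≠ y)
    (S T : Matrix (Fin d) (Fin d) ℝ) (hT : IsUnit T)
    (M Λ : ℝ)
    (hST : matNorm (S - T) ≤ M) (hTinv : matNorm T⁻¹ ≤ Λ)
    (z e u : EuclideanSpace ℝ (Fin d)) (H α : Matrix (Fin d) (Fin d) ℝ)
    (hz : z = x - y)
    (he : e = ‖z‖⁻¹ • z)
    (hu : u = ‖matVec T⁻¹ z‖⁻¹ • matVec T⁻¹ z)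
    (hH : H = 1 - (2 : ℝ) • Matrix.vecMulVec (fun i => u i) (fun i => u i))
    (hα : α = S - T * H) :
    2 * Λ⁻¹ - M ≤ ‖matVec αᵀ e‖ := by
  have hz0 : z ≠ 0 := hz ▸ sub_ne_zero.mpr hxy
  have hw0 : matVec T⁻¹ z ≠ 0 := fun h => hz0 <| by
    rw [← matVec_mul_nonsing_inv hT z, h]
    simp [matVec]
  have hu1 : ‖u‖ = 1 := by rw [hu]; exact norm_smul_inv_norm hw0
  have he1 : ‖e‖ = 1 := by rw [he]; exact norm_smul_inv_norm hz0
  have hinner : Λ⁻¹ ≤ ⟪matVec T u, e⟫ := by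
    rw [hu, he, inner_matVec_normalize_inv_normalize hT]
    exact inv_le_norm_div_norm_matVec hTinv hw0
  calc 2 * Λ⁻¹ - M ≤ 2 * ⟪matVec T u, e⟫ - matNorm (S - T) := by linarith
    _ ≤ ‖matVec αᵀ e‖ := by
      rw [hα, hH]
      exact sub_matNorm_le_norm_matVec_transpose_sub_mul_householder S T hu1 he1
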